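/- arXiv:1811.09033 — 5 statements merged into one kernel-verified Lean document; each statement's English description precedes it below -/
import Mathlib

section
/- Suppose a sequence of group homomorphisms A0 → A1 → A2 → A3 (with maps φ0, φ1, φ2) factors through groups B1 and B2 as A0 → B1 → A1 → A2 → B2 → A3 (with maps ψ0, ψ1, φ1, γ, ψ2, so that φ0 = ψ1 ∘ ψ0 and φ2 = ψ2 ∘ γ), and the restrictions im(φ0) → im(φ1) and im(φ1) → im(φ2) (induced by φ1 and φ2 respectively) are isomorphisms. Then the image of the composite homomorphism B1 → B2 (namely γ ∘ φ1 ∘ ψ1) is isomorphic to im(φ1). -/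
/-- If a sequence of group homomorphisms `A0 → A1 → A2 → A3` factors
through `B1` and `B2` as `A0 → B1 → A1 → A2 → B2 → A3`, and the restrictions
`im φ0 → im φ1` (induced by `φ1`) and `im φ1 → im φ2` (induced by `φ2`) are
isomorphisms, then the image of the composite `B1 → B2`, namely `γ ∘ φ1 ∘ ψ1`,
is isomorphic to `im φ1`. -/
theorem stmt0 {A0 A1 A2 A3 B1 B2 : Type*}
    [Group A0] [Group A1] [Group A2] [Group A3] [Group B1] [Group B2]
    (φ0 : A0 →* A1) (φ1 : A1 →* A2) (φ2 : A2 →* A3)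
    (ψ0 : A0 →* B1) (ψ1 : B1 →* A1) (γ : A2 →* B2) (ψ2 : B2 →* A3)
    (hfac0 : φ0 = ψ1.comp ψ0) (hfac2 : φ2 = ψ2.comp γ)
    (h01 : Set.BijOn (⇑φ1) (Set.range ⇑φ0) (Set.range ⇑φ1))
    (h12 : Set.BijOn (⇑φ2) (Set.range ⇑φ1) (Set.range ⇑φ2)) :
    Nonempty ((γ.comp (φ1.comp ψ1)).range ≃* φ1.range) := by
  have hmem : ∀ x : A2, x ∈ φ1.range → γ x ∈ (γ.comp (φ1.comp ψ1)).range := by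
    rintro x ⟨a, rfl⟩
    obtain ⟨y, ⟨c, rfl⟩, hy⟩ := h01.surjOn ⟨a, rfl⟩
    refine ⟨ψ0 c, ?_⟩
    simp only [MonoidHom.coe_comp, Function.comp_apply]
    rw [← hy, ← MonoidHom.comp_apply ψ1 ψ0, ← hfac0]
  let f : φ1.range →* (γ.comp (φ1.comp ψ1)).range :=
    (γ.comp φ1.range.subtype).codRestrict _ (fun x => hmem x x.2)
  have hf : Function.Bijective f := by
    constructor
    · intro x y hxy
      have h : γ (x : A2) = γ (y : A2) := congrArg Subtype.val hxy
      have h2 : φ2 (x : A2) = φ2 (y : A2) := by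
        rw [hfac2]
        simp only [MonoidHom.comp_apply, h]
      have hx : (x : A2) ∈ Set.range ⇑φ1 := x.2
      have hy : (y : A2) ∈ Set.range ⇑φ1 := y.2
      exact Subtype.ext (h12.injOn hx hy h2)
    · rintro ⟨_, b, rfl⟩
      exact ⟨⟨φ1 (ψ1 b), ⟨ψ1 b, rfl⟩⟩, rfl⟩
  exact ⟨(MulEquiv.ofBijective f hf).symm⟩
end

section
/- Let A1 → A2 → A3 be group homomorphisms whose composites A1 → A2, A2 → A3, and A1 → A3 are all isomorphisms, and suppose this sequence factors through groups B1 and B2 as A1 → B1 → A2 → B2 → A3. Then the image of the induced homomorphism B1 → B2 is isomorphic to A2. -/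
/-- If `f1 : A1 → A2` and `f2 : A2 → A3` are isomorphisms (as is their
composite), and the sequence factors through `B1` and `B2` as
`A1 → B1 → A2 → B2 → A3` (so `f1 = q1 ∘ p1`, `f2 = q2 ∘ p2`), then the image of the
induced homomorphism `B1 → B2` (namely `p2 ∘ q1`) is isomorphic to `A2`. -/
theorem stmt1 {A1 A2 A3 B1 B2 : Type*}
    [Group A1] [Group A2] [Group A3] [Group B1] [Group B2]
    (f1 : A1 →* A2) (f2 : A2 →* A3)
    (p1 : A1 →* B1) (q1 : B1 →* A2) (p2 : A2 →* B2) (q2 : B2 →* A3)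
    (h1 : Function.Bijective f1) (h2 : Function.Bijective f2)
    (h3 : Function.Bijective (f2.comp f1))
    (e1 : f1 = q1.comp p1) (e2 : f2 = q2.comp p2) :
    Nonempty ((p2.comp q1).range ≃* A2) := by
  have hp2 : Function.Injective p2 := by
    have : Function.Injective (q2.comp p2) := by rw [← e2]; exact h2.1
    exact fun a b hab => this (by simp [MonoidHom.comp_apply, hab])
  have hrange : (p2.comp q1).range = p2.range := by
    apply le_antisymm
    · rintro _ ⟨b, rfl⟩; exact ⟨q1 b, rfl⟩
    · rintro _ ⟨a, rfl⟩
      obtain ⟨x, hx⟩ := h1.2 a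
      exact ⟨p1 x, by simp [MonoidHom.comp_apply, ← hx, e1]⟩
  exact ⟨(MulEquiv.subgroupCongr hrange).trans (MonoidHom.ofInjective hp2).symm⟩
end

section
/- Let M ⊂ R^n be a closed submanifold with reach ν, let α ∈ (0, ν), ρ ∈ (α, 2ν − α), x ∈ M, and suppose p ∈ S_ρ(x) ∩ S_{α'}(M) for some α' ∈ [0, α] is a point of tangency (the two hypersurfaces are tangent at p, or p ∈ M when α' = 0 and the line xp is normal to M at the nearest point). Then a contradiction follows; i.e., no such tangency point exists. Equivalently: if y ∈ M is the nearest point of M to p and the segment from x through p extends to y with |x − y| = ρ + α' < 2ν, then the midpoint q of [x, y] has two distinct points of M at distance ≤ |q − y| < ν, contradicting uniqueness of nearest points within the reach. -/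
/-!
Let `T = |x - y| / 2 < ν`. It suffices to find a point `q` with `d(q, M) = T` at distance at most
`T - α'` from `p`: such a point is forced to be the midpoint of `[x, y]`, which then has the two
distinct nearest points `x` and `y`. To find it, follow from `p` the gradient flow of the distance
function `d`, whose gradient `(q - ξ q) / d(q)` is continuous because nearest points `ξ q` are
unique within the reach; along this unit-speed flow `d` grows at unit rate. The flow is replaced by
an Euler scheme, with compactness recovering an exact point from the approximate ones.
-/

open Metric
open scoped RealInnerProductSpace

variable {E : Type*}

def IsNearestPoint [PseudoMetricSpace E] (M : Set E) (q z : E) : Prop :=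
  z ∈ M ∧ dist q z = infDist q M

section Proper

variable [MetricSpace E] [ProperSpace E] {M K : Set E}

theorem isCompact_nearestPointGraph (hM : IsClosed M) (hK : IsCompact K) :
    IsCompact {g : E × E | g.1 ∈ K ∧ IsNearestPoint M g.1 g.2} := by
  rcases M.eq_empty_or_nonempty with rfl | ⟨m, hm⟩
  · simp [IsNearestPoint]
  obtain ⟨R, hR⟩ := hK.isBounded.subset_closedBall m
  refine (hK.prod (isCompact_closedBall m (2 * R))).of_isClosed_subset ?_ ?_
  · exact (hK.isClosed.preimage continuous_fst).inter ((hM.preimage continuous_snd).inter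
      (isClosed_eq continuous_dist ((continuous_infDist_pt M).comp continuous_fst)))
  · rintro ⟨q, z⟩ ⟨hq, -, hqz⟩
    refine ⟨hq, ?_⟩
    have hqm : dist q m ≤ R := hR hq
    calc dist z m ≤ dist q z + dist q m := dist_triangle_left _ _ _
      _ ≤ 2 * R := by rw [hqz]; linarith [infDist_le_dist_of_mem hm (x := q)]

theorem exists_dist_nearestPoint_le (hM : IsClosed M) (hK : IsCompact K)
    (huniq : ∀ q ∈ K, {z | IsNearestPoint M q z}.Subsingleton) {ε : ℝ} (hε : 0 < ε) :
    ∃ δ > 0, ∀ q ∈ K, ∀ q' ∈ K, dist q q' ≤ δ → ∀ z z',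
      IsNearestPoint M q z → IsNearestPoint M q' z' → dist z z' ≤ ε := by
  set G := {g : E × E | g.1 ∈ K ∧ IsNearestPoint M g.1 g.2}
  have hG : IsCompact G := isCompact_nearestPointGraph hM hK
  set B := {b : (E × E) × (E × E) | b.1 ∈ G ∧ b.2 ∈ G ∧ ε ≤ dist b.1.2 b.2.2}
  have hB : IsCompact B := (hG.prod hG).of_isClosed_subset
    ((hG.isClosed.preimage continuous_fst).inter ((hG.isClosed.preimage continuous_snd).inter
      (isClosed_le continuous_const
        (continuous_dist.comp (continuous_fst.snd.prodMk continuous_snd.snd)))))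
    fun b hb => ⟨hb.1, hb.2.1⟩
  rcases B.eq_empty_or_nonempty with hBe | hBne
  · refine ⟨1, one_pos, fun q hq q' hq' _ z z' hz hz' => ?_⟩
    by_contra! h
    exact Set.eq_empty_iff_forall_notMem.1 hBe ((q, z), (q', z'))
      ⟨⟨hq, hz⟩, ⟨hq', hz'⟩, h.le⟩
  obtain ⟨b, ⟨⟨hq, hz⟩, ⟨-, hz'⟩, hzz'⟩, hmin⟩ :=
    hB.exists_isMinOn hBne (f := fun b => dist b.1.1 b.2.1) (by fun_prop)
  have hpos : 0 < dist b.1.1 b.2.1 := by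
    refine dist_pos.2 fun h => ?_
    rw [← h] at hz'
    rw [huniq _ hq hz hz', dist_self] at hzz'
    linarith
  refine ⟨dist b.1.1 b.2.1 / 2, half_pos hpos, fun q hq q' hq' hqq' z z' hz hz' => ?_⟩
  by_contra! h
  linarith [isMinOn_iff.1 hmin ((q, z), (q', z')) ⟨⟨hq, hz⟩, ⟨hq', hz'⟩, h.le⟩]

end Proper

section InnerProduct

variable [NormedAddCommGroup E] [InnerProductSpace ℝ E] {M : Set E}

theorem infDist_add_le_infDist_step {q z z' : E} {h θ : ℝ} (hz : IsNearestPoint M q z)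
    (hd : 0 < infDist q M) (hh : 0 ≤ h) (hθ0 : 0 ≤ θ) (hθ1 : θ ≤ 1)
    (hz' : IsNearestPoint M (q + (h / infDist q M) • (q - z)) z')
    (hzz' : dist z z' ≤ θ * infDist q M) :
    infDist q M + (1 - θ) * h ≤ infDist (q + (h / infDist q M) • (q - z)) M := by
  set d := infDist q M
  set c := h / d
  have hcd : c * d = h := div_mul_cancel₀ h hd.ne'
  have hc : 0 ≤ c := div_nonneg hh hd.le
  have hqz : ‖q - z‖ = d := by rw [← dist_eq_norm, hz.2]
  have hqz' : d ≤ ‖q - z'‖ := by rw [← dist_eq_norm]; exact infDist_le_dist_of_mem hz'.1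
  have hinner : d ^ 2 - θ * d * d ≤ ⟪q - z', q - z⟫ := by
    have hsplit : ⟪q - z', q - z⟫ = ‖q - z‖ ^ 2 + ⟪z - z', q - z⟫ := by
      rw [← real_inner_self_eq_norm_sq, ← inner_add_left, sub_add_sub_cancel]
    have hcs := (abs_le.1 (abs_real_inner_le_norm (z - z') (q - z))).1
    rw [← dist_eq_norm, hqz] at hcs
    nlinarith [hsplit, hcs, mul_le_mul_of_nonneg_right hzz' hd.le]
  have hexp : infDist (q + c • (q - z)) M ^ 2
      = ‖q - z'‖ ^ 2 + 2 * (c * ⟪q - z', q - z⟫) + h ^ 2 := by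
    rw [← hz'.2, dist_eq_norm, add_sub_right_comm, norm_add_sq_real, inner_smul_right, norm_smul,
      Real.norm_eq_abs, abs_of_nonneg hc, hqz, hcd]
  have hsq : (d + (1 - θ) * h) ^ 2 ≤ infDist (q + c • (q - z)) M ^ 2 := by
    have hcI : c * (d ^ 2 - θ * d * d) = (1 - θ) * h * d := by rw [← hcd]; ring
    nlinarith [mul_le_mul_of_nonneg_left hinner hc, pow_le_pow_left₀ hd.le hqz' 2,
      mul_nonneg (mul_nonneg hθ0 (by linarith : 0 ≤ 2 - θ)) (sq_nonneg h)]
  exact le_of_pow_le_pow_left₀ two_ne_zero infDist_nonneg hsq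

end InnerProduct

section Flow

variable [NormedAddCommGroup E] [InnerProductSpace ℝ E] [ProperSpace E] {M : Set E}

/-- Euler scheme for the flow of the gradient `(q - ξ q) / d(q)` of the distance function:
uniform continuity of nearest points makes each step of length `h` gain at least `(1 - θ) h`. -/
theorem exists_mem_closedBall_infDist_ge (hM : IsClosed M) {p : E} {Δ θ : ℝ}
    (hd : 0 < infDist p M) (hΔ : 0 ≤ Δ) (hθ0 : 0 < θ) (hθ1 : θ ≤ 1)
    (huniq : ∀ q ∈ closedBall p Δ, {z | IsNearestPoint M q z}.Subsingleton) :
    ∃ q ∈ closedBall p Δ, infDist p M + (1 - θ) * Δ ≤ infDist q M := by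
  have hMne : M.Nonempty := Set.nonempty_iff_ne_empty.2 (by rintro rfl; simp at hd)
  choose ξ hξM hξ using hM.exists_infDist_eq_dist hMne
  have hnear (q : E) : IsNearestPoint M q (ξ q) := ⟨hξM q, (hξ q).symm⟩
  obtain ⟨δ, hδ, hξδ⟩ := exists_dist_nearestPoint_le hM (isCompact_closedBall p Δ) huniq
    (mul_pos hθ0 hd)
  set N : ℕ := ⌈Δ / δ⌉₊ + 1
  have hN : (0 : ℝ) < N := by positivity
  set h := Δ / N
  have hh : 0 ≤ h := by positivity
  have hNh : N * h = Δ := mul_div_cancel₀ Δ hN.ne'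
  have hhδ : h ≤ δ := by
    rw [div_le_iff₀ hN, mul_comm, ← div_le_iff₀ hδ]
    exact (Nat.le_ceil _).trans (by simp [N])
  obtain ⟨s, hs0, hs⟩ : ∃ s : ℕ → E, s 0 = p ∧
      ∀ j, s (j + 1) = s j + (h / infDist (s j) M) • (s j - ξ (s j)) :=
    ⟨fun j => (fun q => q + (h / infDist q M) • (q - ξ q))^[j] p, rfl,
      fun j => Function.iterate_succ_apply' _ j p⟩
  have hflow : ∀ j ≤ N,
      dist (s j) p ≤ j * h ∧ infDist p M + (1 - θ) * (j * h) ≤ infDist (s j) M := by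
    intro j
    induction j with
    | zero => simp [hs0]
    | succ j ih =>
      intro hj
      obtain ⟨hjp, hjd⟩ := ih (Nat.le_of_succ_le hj)
      have hjN : ((j : ℝ) + 1) * h ≤ Δ := by
        rw [← hNh]; gcongr; exact_mod_cast hj
      have hdj : infDist p M ≤ infDist (s j) M := by
        linarith [mul_nonneg (sub_nonneg.2 hθ1) (mul_nonneg j.cast_nonneg hh)]
      have hstep : dist (s (j + 1)) (s j) = h := by
        rw [hs, dist_self_add_left, norm_smul, ← dist_eq_norm, ← hξ, Real.norm_eq_abs,
          abs_of_nonneg (div_nonneg hh infDist_nonneg), div_mul_cancel₀ h (by linarith)]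
      have hjp' : dist (s (j + 1)) p ≤ (j + 1) * h := by
        linarith [dist_triangle (s (j + 1)) (s j) p]
      have hξj : dist (ξ (s j)) (ξ (s (j + 1))) ≤ θ * infDist (s j) M :=
        (hξδ _ (mem_closedBall.2 (by linarith)) _ (mem_closedBall.2 (by linarith))
          (by rw [dist_comm, hstep]; exact hhδ) _ _ (hnear _) (hnear _)).trans (by gcongr)
      have hgain := infDist_add_le_infDist_step (hnear (s j)) (by linarith) hh hθ0.le hθ1
        (hs j ▸ hnear (s (j + 1))) hξj
      rw [← hs] at hgain
      push_cast
      constructor <;> linarith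
  obtain ⟨hNp, hNd⟩ := hflow N le_rfl
  exact ⟨s N, by rwa [mem_closedBall, ← hNh], by rwa [← hNh]⟩

theorem exists_mem_closedBall_infDist_eq_add (hM : IsClosed M) {p : E} {Δ : ℝ}
    (hd : 0 < infDist p M) (hΔ : 0 ≤ Δ)
    (huniq : ∀ q ∈ closedBall p Δ, {z | IsNearestPoint M q z}.Subsingleton) :
    ∃ q ∈ closedBall p Δ, infDist q M = infDist p M + Δ := by
  obtain ⟨q, hq, hmax⟩ := (isCompact_closedBall p Δ).exists_isMaxOn
    ⟨p, mem_closedBall_self hΔ⟩ (continuous_infDist_pt M).continuousOn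
  refine ⟨q, hq, le_antisymm ?_ ?_⟩
  · linarith [infDist_le_infDist_add_dist (s := M) (x := q) (y := p), mem_closedBall.1 hq]
  by_contra! hlt
  have hpq := isMaxOn_iff.1 hmax p (mem_closedBall_self hΔ)
  have hΔpos : 0 < Δ := by linarith
  set θ := (infDist p M + Δ - infDist q M) / (2 * Δ)
  have hθΔ : θ * Δ = (infDist p M + Δ - infDist q M) / 2 := by simp only [θ]; field_simp
  obtain ⟨q', hq', hq'd⟩ := exists_mem_closedBall_infDist_ge (θ := θ) hM hd hΔ
    (by positivity) (by rw [div_le_one (by positivity)]; linarith) huniq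
  linarith [isMaxOn_iff.1 hmax q' hq']

end Flow

section Segment

variable [NormedAddCommGroup E] [InnerProductSpace ℝ E]

/-- Equality case of the triangle inequality: the closed ball about `p` of radius
`|x - y| / 2 - |p - y|` meets the complement of the open ball about `y` of radius `|x - y| / 2`
only at the midpoint. -/
theorem eq_midpoint_of_mem_segment {x y p q : E} (hseg : p ∈ segment ℝ x y) (hpy : p ≠ y)
    (hqp : dist q p ≤ dist x y / 2 - dist p y) (hqy : dist x y / 2 ≤ dist q y) :
    q = midpoint ℝ x y := by
  obtain ⟨a, b, ha, -, hab, hp⟩ := hseg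
  obtain rfl : b = 1 - a := by linarith
  have hu : p - y = a • (x - y) := by rw [← hp]; module
  have hnu : dist p y = a * dist x y := by
    rw [dist_eq_norm, hu, norm_smul, Real.norm_of_nonneg ha, dist_eq_norm]
  obtain ⟨r, hr, hv⟩ : ∃ r : ℝ, 0 ≤ r ∧ r • (p - y) = q - p := by
    refine (sameRay_iff_norm_add.2 (le_antisymm (norm_add_le _ _) ?_)).exists_nonneg_left
      (sub_ne_zero.2 hpy)
    rw [add_comm (p - y), sub_add_sub_cancel, ← dist_eq_norm, ← dist_eq_norm, ← dist_eq_norm]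
    linarith [dist_triangle q p y]
  have hqy' : q - y = ((r + 1) * a) • (x - y) := by
    rw [mul_smul, ← hu, add_smul, one_smul, hv, sub_add_sub_cancel]
  have hD : 0 < dist x y := by
    refine dist_pos.2 fun hxy => hpy ?_
    rwa [hxy, ← add_smul, add_sub_cancel, one_smul, eq_comm] at hp
  have hnq : dist q y = (r + 1) * a * dist x y := by
    rw [dist_eq_norm, hqy', norm_smul, Real.norm_of_nonneg (by positivity), dist_eq_norm]
  have hnv : dist q p = r * (a * dist x y) := by
    rw [dist_eq_norm, ← hv, norm_smul, Real.norm_of_nonneg hr, ← dist_eq_norm, hnu]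
  have hhalf : (r + 1) * a = ⅟2 := by
    rw [invOf_eq_inv]
    nlinarith
  rw [← sub_left_inj (a := y), hqy', hhalf, ← vsub_eq_sub, ← midpoint_vsub_right, vsub_eq_sub]

end Segment

theorem stmt10_general {n : ℕ} (M : Set (EuclideanSpace ℝ (Fin n))) (ν : ℝ)
    (hMcl : IsClosed M)
    (hreach : ∀ y, Metric.infDist y M < ν →
      ∃! z, z ∈ M ∧ dist y z = Metric.infDist y M)
    (x p y : EuclideanSpace ℝ (Fin n)) (α α' ρ : ℝ)
    (hα' : α' ∈ Set.Icc 0 α) (hρ : ρ ∈ Set.Ioo α (2 * ν - α))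
    (hx : x ∈ M) (hy : y ∈ M) (hpM : p ∉ M)
    (hpd : Metric.infDist p M = α') (hpy : dist p y = α')
    (hseg : p ∈ segment ℝ x y) (hxy : dist x y = ρ + α') :
    False := by
  have hpy' : p ≠ y := fun h => hpM (h ▸ hy)
  have hα'pos : 0 < α' := hpy ▸ dist_pos.2 hpy'
  have huniq (q) (hq : infDist q M < ν) : {z | IsNearestPoint M q z}.Subsingleton :=
    fun _ hz _ hz' => (hreach q hq).unique hz hz'
  obtain ⟨q, hqp, hqd⟩ := exists_mem_closedBall_infDist_eq_add hMcl (Δ := dist x y / 2 - α')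
    (hpd ▸ hα'pos) (by linarith [hρ.1, hα'.2]) fun q hq => huniq q <| by
      linarith [infDist_le_dist_of_mem hy (x := q), dist_triangle q p y, mem_closedBall.1 hq,
        hρ.2, hα'.2]
  rw [hpd, add_sub_cancel] at hqd
  have hmid : q = midpoint ℝ x y := eq_midpoint_of_mem_segment hseg hpy'
    (by rw [hpy]; exact hqp) (hqd ▸ infDist_le_dist_of_mem hy)
  have hqx : dist q x = infDist q M := by
    rw [hqd, hmid, dist_midpoint_left, Real.norm_two]; ring
  have hqy : dist q y = infDist q M := by
    rw [hqd, hmid, dist_midpoint_right, Real.norm_two]; ring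
  have hxy' : x = y := huniq q (by linarith [hρ.2, hα'.2]) ⟨hx, hqx⟩ ⟨hy, hqy⟩
  rw [hxy', dist_self] at hxy
  linarith [hρ.1, hα'.2]

/-- No tangency configuration exists.  Let `M ⊆ ℝⁿ` be closed with
reach `ν > 0` (unique nearest points within distance `ν`), `x ∈ M`,
`α ∈ (0,ν)`, `α' ∈ [0,α]`, `ρ ∈ (α, 2ν − α)`.  Suppose `p ∉ M` is a point with
`dist p x = ρ`, `d(p,M) = α'` realized at a nearest point `y ∈ M`, and `p` lies
on the segment from `x` to `y` with `dist x y = ρ + α'` (so `x`, `p`, `y` are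
collinear and the segment from `x` through `p` extends to the nearest point `y`).
Then a contradiction follows: the midpoint of `[x,y]` would be a point within
the reach having two distinct nearest points of `M`. -/
theorem stmt10 {n : ℕ} (M : Set (EuclideanSpace ℝ (Fin n))) (ν : ℝ) (hν : 0 < ν)
    (hMne : M.Nonempty) (hMcl : IsClosed M)
    (hreach : ∀ y, Metric.infDist y M < ν →
      ∃! z, z ∈ M ∧ dist y z = Metric.infDist y M)
    (x p y : EuclideanSpace ℝ (Fin n)) (α α' ρ : ℝ)
    (hα : α ∈ Set.Ioo 0 ν) (hα' : α' ∈ Set.Icc 0 α) (hρ : ρ ∈ Set.Ioo α (2 * ν - α))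
    (hx : x ∈ M) (hy : y ∈ M) (hpM : p ∉ M)
    (hpx : dist p x = ρ) (hpd : Metric.infDist p M = α') (hpy : dist p y = α')
    (hseg : p ∈ segment ℝ x y) (hxy : dist x y = ρ + α') :
    False :=
  stmt10_general M ν hMcl hreach x p y α α' ρ hα' hρ hx hy hpM hpd hpy hseg hxy
end

section
/- With notation as in the definition of A_x(ε): the line sections A_x(ε | R=R', r=r') = {α : (R',r',α) ∈ A_x(ε)}, A_x(ε | R=R', α=α') = {r : (R',r,α') ∈ A_x(ε)}, and A_x(ε | r=r', α=α') = {R : (R,r',α) ∈ A_x(ε)} are all (possibly degenerate or empty) intervals in R₊. -/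
/-- A strong deformation retraction of the topological pair `(A', B')` onto the
subpair `(A, B)`: a homotopy `F` on `A' × [0,1]` starting at the identity,
ending in `A` (resp. carrying `B'` into `B`), keeping `A'` (resp. `B'`)
invariant and fixing `A` pointwise. -/
def PairSDR {X : Type*} [TopologicalSpace X] (A B A' B' : Set X) : Prop :=
  ∃ F : X × ℝ → X,
    ContinuousOn F (A' ×ˢ Set.Icc (0 : ℝ) 1) ∧
    (∀ x ∈ A', ∀ t ∈ Set.Icc (0 : ℝ) 1, F (x, t) ∈ A') ∧
    (∀ x ∈ A', F (x, 0) = x) ∧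
    (∀ x ∈ A', F (x, 1) ∈ A) ∧
    (∀ x ∈ B', ∀ t ∈ Set.Icc (0 : ℝ) 1, F (x, t) ∈ B') ∧
    (∀ x ∈ B', F (x, 1) ∈ B) ∧
    (∀ x ∈ A, ∀ t ∈ Set.Icc (0 : ℝ) 1, F (x, t) = x)

/-- An abstract (relative, all-degrees) homology theory on pairs of subsets of a
topological space `X`: abelian groups `H A B` (playing the role of
`H(A, A − ·)`-type relative homology `H_*(A,B)`), functorial inclusion-induced
homomorphisms, invariant under strong deformation retractions of pairs.  Singular
homology satisfies these axioms. -/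
structure HomTheory (X : Type*) [TopologicalSpace X] where
  H : Set X → Set X → AddCommGrpCat.{u_2}
  map : ∀ {A B A' B' : Set X}, A ⊆ A' → B ⊆ B' → (H A B →+ H A' B')
  map_id : ∀ {A B : Set X},
    map (subset_refl A) (subset_refl B) = AddMonoidHom.id (H A B)
  map_comp : ∀ {A B A' B' A'' B'' : Set X} (h1 : A ⊆ A') (h2 : B ⊆ B')
    (h3 : A' ⊆ A'') (h4 : B' ⊆ B''),
    (map h3 h4).comp (map h1 h2) = map (h1.trans h3) (h2.trans h4)
  sdr_bij : ∀ {A B A' B' : Set X} (hA : A ⊆ A') (hB : B ⊆ B'),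
    PairSDR A B A' B' → Function.Bijective (map hA hB)

/-- The set `A_x(ε)` of admissible scale triples `(R, r, α)` at a point `x` of a
compact set `K`, relative to a homology theory `T`.  Writing
`F(a,b) = H(D_a(K), D_a(K) − B_b(x))` (with `F(0,0) = H(K, K − {x})` and
`D_a(K)` the closed `a`-neighborhood `cthickening a K`), a triple with
`R ≥ r > α ≥ ε ≥ 0` is admissible if: every `D_ρ(x)`, `ρ ∈ (0,R]`, is a
topological ball; the inclusion-induced `i₊ : F(0,R) → F(ε,R)` is injective and
the restriction of `j₊ : F(ε,R) → F(α,r)` to `im i₊` is an isomorphism onto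
`im j₊`; and the maps `F(0,R) → F(0,ρ) → F(0,0)` are isomorphisms for
`ρ ∈ [r,R]`. -/
def Amem {X : Type*} [MetricSpace X] (T : HomTheory X) (K : Set X) (x : X)
    (ε R r α : ℝ) : Prop :=
  0 ≤ ε ∧ ε ≤ α ∧ α < r ∧ r ≤ R ∧
  (∀ ρ, 0 < ρ → ρ ≤ R → ∃ m : ℕ, Nonempty
    (↥(Metric.closedBall x ρ) ≃ₜ
      ↥(Metric.closedBall (0 : EuclideanSpace ℝ (Fin m)) 1))) ∧
  (∀ (hεα : ε ≤ α) (hrR : r ≤ R),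
    let i : T.H K (K \ Metric.ball x R) →+
        T.H (Metric.cthickening ε K) (Metric.cthickening ε K \ Metric.ball x R) :=
      T.map (Metric.self_subset_cthickening K)
        (Set.diff_subset_diff_left (Metric.self_subset_cthickening K))
    let j : T.H (Metric.cthickening ε K) (Metric.cthickening ε K \ Metric.ball x R) →+
        T.H (Metric.cthickening α K) (Metric.cthickening α K \ Metric.ball x r) :=
      T.map (Metric.cthickening_mono hεα K)
        (Set.diff_subset_diff (Metric.cthickening_mono hεα K)
          (Metric.ball_subset_ball hrR))
    Function.Injective i ∧ Set.BijOn j (Set.range i) (Set.range j)) ∧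
  (∀ ρ, 0 < ρ → r ≤ ρ → ∀ (hρR : ρ ≤ R) (hρ0 : 0 < ρ),
    Function.Bijective
      (T.map (subset_refl K)
        (Set.diff_subset_diff_right (Metric.ball_subset_ball hρR)) :
        T.H K (K \ Metric.ball x R) →+ T.H K (K \ Metric.ball x ρ)) ∧
    Function.Bijective
      (T.map (subset_refl K)
        (Set.diff_subset_diff_right
          (Set.singleton_subset_iff.mpr (Metric.mem_ball_self hρ0))) :
        T.H K (K \ Metric.ball x ρ) →+ T.H K (K \ {x})))

/-!
The admissibility condition on `i₊ : F(0,R) → F(ε,R)` and `j₊ : F(ε,R) → F(α,r)` (`i₊` injective,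
`j₊` an isomorphism from `im i₊` onto `im j₊`) says exactly that `j₊ ∘ i₊` is injective with the
same image as `j₊`. For an intermediate `α` (or `r`), the middle `j₊` factors through the `j₊` of
one endpoint and into the `j₊` of the other, so the image condition is inherited from the first
and injectivity from the second. For an intermediate `R`, the admissibility of the outer endpoint
`R₂` makes `F(0,R) → F(0,R₁)` an isomorphism, which transports the condition from the inner
endpoint `R₁` to `R`.
-/

open Set Function

theorem injective_and_bijOn_range_iff {A B C : Type*} (i : A → B) (j : B → C) :
    Injective i ∧ BijOn j (range i) (range j) ↔
      Injective (j ∘ i) ∧ range (j ∘ i) = range j := by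
  constructor
  · rintro ⟨hi, hj⟩
    refine ⟨fun a b hab => hi (hj.injOn ⟨a, rfl⟩ ⟨b, rfl⟩ hab), ?_⟩
    rw [range_comp, hj.image_eq]
  · rintro ⟨hji, hrange⟩
    refine ⟨hji.of_comp, ⟨mapsTo_range j _, ?_, ?_⟩⟩
    · rintro _ ⟨a, rfl⟩ _ ⟨b, rfl⟩ hab
      exact congrArg i (hji hab)
    · rw [← hrange, range_comp]
      exact surjOn_image j _

theorem injective_comp_and_range_eq_of_factor {A B C₁ C C₂ : Type*} {i : A → B}
    {j₁ : B → C₁} {j : B → C} {j₂ : B → C₂} (k : C₁ → C) (k' : C → C₂)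
    (hj : j = k ∘ j₁) (hj₂ : j₂ = k' ∘ j)
    (h₁ : range (j₁ ∘ i) = range j₁) (h₂ : Injective (j₂ ∘ i)) :
    Injective (j ∘ i) ∧ range (j ∘ i) = range j := by
  subst hj hj₂
  refine ⟨h₂.of_comp (f := k'), ?_⟩
  rw [comp_assoc, range_comp k, h₁, range_comp]

theorem injective_comp_and_range_eq_of_square {A' A B' B C : Type*} {i' : A' → B'}
    {i : A → B} {j' : B' → C} {j : B → C} (p : A' → A) (q : B' → B) (hp : Bijective p)
    (hsq : q ∘ i' = i ∘ p) (hj : j' = j ∘ q)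
    (hinj : Injective (j ∘ i)) (hrange : range (j ∘ i) = range j) :
    Injective (j' ∘ i') ∧ range (j' ∘ i') = range j' := by
  have hcomp : j' ∘ i' = (j ∘ i) ∘ p := by rw [hj, comp_assoc, hsq, comp_assoc]
  refine ⟨hcomp ▸ hinj.comp hp.injective, (range_comp_subset_range i' j').antisymm ?_⟩
  rw [hcomp, hp.surjective.range_comp, hrange, hj]
  exact range_comp_subset_range q j

namespace HomTheory

variable {X : Type*} [TopologicalSpace X] (T : HomTheory X)

theorem coe_map_trans {A B A' B' A'' B'' : Set X} (h₁ : A ⊆ A') (h₂ : B ⊆ B')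
    (h₃ : A' ⊆ A'') (h₄ : B' ⊆ B'') :
    ⇑(T.map (h₁.trans h₃) (h₂.trans h₄)) = T.map h₃ h₄ ∘ T.map h₁ h₂ := by
  rw [← T.map_comp h₁ h₂ h₃ h₄, AddMonoidHom.coe_comp]

theorem bijective_map_of_bijective_trans {A B A' B' A'' B'' : Set X} (h₁ : A ⊆ A')
    (h₂ : B ⊆ B') (h₃ : A' ⊆ A'') (h₄ : B' ⊆ B'') (h : Bijective (T.map h₁ h₂))
    (h' : Bijective (T.map (h₁.trans h₃) (h₂.trans h₄))) :
    Bijective (T.map h₃ h₄) := by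
  rw [T.coe_map_trans h₁ h₂ h₃ h₄] at h'
  exact (Bijective.of_comp_iff _ h).mp h'

end HomTheory

section AdmissibleSections

open Metric

variable {X : Type*} [MetricSpace X] (T : HomTheory X) (K : Set X) (x : X)

theorem ordConnected_alphaSection (ε R r : ℝ) :
    {α : ℝ | Amem T K x ε R r α}.OrdConnected := by
  refine ⟨?_⟩
  rintro α₁ ⟨hε, hεα₁, hα₁r, hrR, hball, hij₁, hF⟩ α₂ ⟨-, hεα₂, hα₂r, -, -, hij₂, -⟩ α ⟨hα₁, hα₂⟩
  refine ⟨hε, hεα₁.trans hα₁, hα₂.trans_lt hα₂r, hrR, hball, fun hεα _ => ?_, hF⟩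
  refine (injective_and_bijOn_range_iff _ _).mpr ?_
  have hA : cthickening α₁ K ⊆ cthickening α K := cthickening_mono hα₁ K
  have hA' : cthickening α K ⊆ cthickening α₂ K := cthickening_mono hα₂ K
  exact injective_comp_and_range_eq_of_factor (T.map hA (sdiff_subset_sdiff_left hA))
    (T.map hA' (sdiff_subset_sdiff_left hA')) (T.coe_map_trans ..) (T.coe_map_trans ..)
    ((injective_and_bijOn_range_iff _ _).mp (hij₁ hεα₁ hrR)).2
    ((injective_and_bijOn_range_iff _ _).mp (hij₂ hεα₂ hrR)).1

theorem ordConnected_innerRadiusSection (ε R α : ℝ) :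
    {r : ℝ | Amem T K x ε R r α}.OrdConnected := by
  refine ⟨?_⟩
  rintro r₁ ⟨hε, hεα, hαr₁, hr₁R, hball, hij₁, hF⟩ r₂ ⟨-, -, -, hr₂R, -, hij₂, -⟩ r ⟨hr₁, hr₂⟩
  refine ⟨hε, hεα, hαr₁.trans_le hr₁, hr₂.trans hr₂R, hball, fun _ _ => ?_,
    fun ρ hρ hrρ => hF ρ hρ (hr₁.trans hrρ)⟩
  exact (injective_and_bijOn_range_iff _ _).mpr <| injective_comp_and_range_eq_of_factor
    (T.map subset_rfl (sdiff_subset_sdiff_right (ball_subset_ball hr₂)))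
    (T.map subset_rfl (sdiff_subset_sdiff_right (ball_subset_ball hr₁)))
    (T.coe_map_trans ..) (T.coe_map_trans ..)
    ((injective_and_bijOn_range_iff _ _).mp (hij₂ hεα hr₂R)).2
    ((injective_and_bijOn_range_iff _ _).mp (hij₁ hεα hr₁R)).1

theorem ordConnected_outerRadiusSection (ε r α : ℝ) :
    {R : ℝ | Amem T K x ε R r α}.OrdConnected := by
  refine ⟨?_⟩
  rintro R₁ ⟨hε, hεα, hαr, hrR₁, -, hij₁, -⟩ R₂ ⟨-, -, -, -, hball, -, hF₂⟩ R ⟨hR₁, hR₂⟩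
  have hr : 0 < r := hε.trans hεα |>.trans_lt hαr
  have hF : ∀ ρ, 0 < ρ → r ≤ ρ → ∀ hρR : ρ ≤ R,
      Bijective (T.map subset_rfl (sdiff_subset_sdiff_right (ball_subset_ball hρR)) :
        T.H K (K \ ball x R) →+ T.H K (K \ ball x ρ)) := fun ρ hρ hrρ hρR =>
    T.bijective_map_of_bijective_trans subset_rfl
      (sdiff_subset_sdiff_right (ball_subset_ball hR₂)) subset_rfl
      (sdiff_subset_sdiff_right (ball_subset_ball hρR))
      (hF₂ R (hρ.trans_le hρR) (hrρ.trans hρR) hR₂ (hρ.trans_le hρR)).1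
      (hF₂ ρ hρ hrρ (hρR.trans hR₂) hρ).1
  refine ⟨hε, hεα, hαr, hrR₁.trans hR₁, fun ρ hρ hρR => hball ρ hρ (hρR.trans hR₂),
    fun _ hrR => ?_,
    fun ρ hρ hrρ hρR hρ' => ⟨hF ρ hρ hrρ hρR, (hF₂ ρ hρ hrρ (hρR.trans hR₂) hρ').2⟩⟩
  obtain ⟨hinj, hrange⟩ := (injective_and_bijOn_range_iff _ _).mp (hij₁ hεα hrR₁)
  refine (injective_and_bijOn_range_iff _ _).mpr ?_
  have hsub : cthickening ε K \ ball x R ⊆ cthickening ε K \ ball x R₁ :=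
    sdiff_subset_sdiff_right (ball_subset_ball hR₁)
  exact injective_comp_and_range_eq_of_square _ (T.map subset_rfl hsub)
    (hF R₁ (hr.trans_le hrR₁) hrR₁ hR₁) (by rw [← T.coe_map_trans, ← T.coe_map_trans])
    (T.coe_map_trans ..) hinj hrange

end AdmissibleSections

theorem stmt13_general {X : Type*} [MetricSpace X] (T : HomTheory X) (K : Set X)
    (x : X)
    (ε R' r' α' : ℝ) :
    {α : ℝ | Amem T K x ε R' r' α}.OrdConnected ∧
    {r : ℝ | Amem T K x ε R' r α'}.OrdConnected ∧
    {R : ℝ | Amem T K x ε R r' α'}.OrdConnected :=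
  ⟨ordConnected_alphaSection T K x ε R' r', ordConnected_innerRadiusSection T K x ε R' α',
    ordConnected_outerRadiusSection T K x ε r' α'⟩

/-- The line sections of `A_x(ε)` — fixing two of the three scales
`R`, `r`, `α` and varying the third — are (possibly degenerate or empty)
intervals of real numbers, i.e. order-connected subsets of `ℝ`. -/
theorem stmt13 {X : Type*} [MetricSpace X] (T : HomTheory X) (K : Set X)
    (hK : IsCompact K) (hKne : K.Nonempty) (x : X) (hx : x ∈ K)
    (ε R' r' α' : ℝ) :
    {α : ℝ | Amem T K x ε R' r' α}.OrdConnected ∧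
    {r : ℝ | Amem T K x ε R' r α'}.OrdConnected ∧
    {R : ℝ | Amem T K x ε R r' α'}.OrdConnected :=
  stmt13_general T K x ε R' r' α'
end

section
/- Let K ⊆ X be compact, U ⊇ K an open neighborhood with a retraction π: U → K. Fix ρ_u > 0 and β > 0, and for x ∈ K, ρ ∈ [0,ρ_u] let U_ρ(x) = π⁻¹(K − D_ρ(x)). Then there exists ε̄(β) > 0 such that for all ε ∈ (0, ε̄(β)), all x in a given compact L ⊆ K, and all ρ ∈ [0, ρ_u]: D_ε(K) − B_{ρ+β}(x) ⊆ U_ρ(x). -/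
/-- Let `K` be compact in a locally compact complete metric space,
`U ⊇ K` open with a retraction `π : U → K`, `L ⊆ K` compact, and fix
`ρ_u, β > 0`.  With `U_ρ(x) = π⁻¹(K − D_ρ(x))` (taken inside `U`), there exists
`ε̄ > 0` such that for all `ε ∈ (0, ε̄)`, all `x ∈ L` and all `ρ ∈ [0, ρ_u]`,
`D_ε(K) − B_{ρ+β}(x) ⊆ U_ρ(x)`. -/
theorem stmt15 {X : Type*} [MetricSpace X] [LocallyCompactSpace X] [CompleteSpace X]
    (K U L : Set X) (hK : IsCompact K) (hKne : K.Nonempty)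
    (hL : IsCompact L) (hLK : L ⊆ K) (hU : IsOpen U) (hKU : K ⊆ U)
    (π : X → X) (hπc : ContinuousOn π U) (hπK : Set.MapsTo π U K)
    (hπid : ∀ x ∈ K, π x = x)
    (ρu β : ℝ) (hρu : 0 < ρu) (hβ : 0 < β) :
    ∃ εb > 0, ∀ ε, 0 < ε → ε < εb → ∀ x ∈ L, ∀ ρ ∈ Set.Icc 0 ρu,
      (Metric.cthickening ε K \ Metric.ball x (ρ + β)) ⊆
        {y ∈ U | π y ∈ K \ Metric.closedBall x ρ} := by
  -- compact neighborhood of K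
  obtain ⟨C, hC, hKC⟩ := exists_compact_superset hK
  -- δ with cthickening δ K inside U ∩ interior C
  obtain ⟨δ, hδpos, hδ⟩ := hK.exists_cthickening_subset_open
    (hU.inter isOpen_interior) (Set.subset_inter hKU hKC)
  have hδU : Metric.cthickening δ K ⊆ U := hδ.trans (Set.inter_subset_left)
  have hcomp : IsCompact (Metric.cthickening δ K) :=
    hC.of_isClosed_subset Metric.isClosed_cthickening
      (hδ.trans ((Set.inter_subset_right).trans interior_subset))
  -- π is uniformly continuous on this compact set
  have huc : UniformContinuousOn π (Metric.cthickening δ K) :=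
    hcomp.uniformContinuousOn_of_continuous (hπc.mono hδU)
  rw [Metric.uniformContinuousOn_iff] at huc
  obtain ⟨η, hηpos, hη⟩ := huc (β / 2) (by linarith)
  refine ⟨min δ (min η (β / 2)), by positivity, ?_⟩
  intro ε hε hεlt x hx ρ hρ y hy
  obtain ⟨hy1, hy2⟩ := hy
  have hεδ : ε < δ := lt_of_lt_of_le hεlt (min_le_left _ _)
  have hyδ : y ∈ Metric.cthickening δ K :=
    Metric.cthickening_mono hεδ.le K hy1
  have hyU : y ∈ U := hδU hyδ
  -- distance from y to π y is small
  have hεη : ε < min η (β / 2) := lt_of_lt_of_le hεlt (min_le_right _ _)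
  have hmem : y ∈ Metric.thickening (min η (β / 2)) K :=
    Metric.cthickening_subset_thickening' (lt_min hηpos (by linarith)) hεη K hy1
  obtain ⟨k, hk, hdk⟩ := Metric.mem_thickening_iff.mp hmem
  have hkδ : k ∈ Metric.cthickening δ K := Metric.self_subset_cthickening K hk
  have hπk : π k = k := hπid k hk
  have hdkη : dist y k < η := lt_of_lt_of_le hdk (min_le_left _ _)
  have hdkβ : dist y k < β / 2 := lt_of_lt_of_le hdk (min_le_right _ _)
  have hd2 : dist (π y) (π k) < β / 2 := hη y hyδ k hkδ hdkη
  have hdyπ : dist y (π y) < β := by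
    have h1 : dist y (π y) ≤ dist y k + dist k (π y) := dist_triangle _ _ _
    have h2 : dist k (π y) = dist (π y) (π k) := by rw [hπk, dist_comm]
    linarith [h1, h2 ▸ hd2]
  refine ⟨hyU, hπK hyU, ?_⟩
  -- y is far from x, so π y is too
  have hxy : ρ + β ≤ dist y x := by
    by_contra h
    exact hy2 (Metric.mem_ball.mpr (by rw [dist_comm] at h ⊢; linarith))
  intro hcb
  have : dist (π y) x ≤ ρ := Metric.mem_closedBall.mp hcb
  have : dist y x ≤ dist y (π y) + dist (π y) x := dist_triangle _ _ _
  linarith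
end
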